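/- Let C and D be reflexive digraph cycles with D non-contractible, and let i be a vertex of D such that σ^i(D) ≤* C. Then the graph Mon_1(C,D;i) is connected; moreover it contains elements Φ_i^m and Φ_i^M such that for every φ ∈ Mon_1(C,D;i) there is a path of monotone one-step up edges from Φ_i^m to φ and a path of monotone one-step up edges from φ to Φ_i^M. -/

import Mathlib

open scoped Classical

namespace Recon

/-- Orientation letters for edges of a digraph cycle: `+`, `-`, `*`. -/
inductive Orient : Type
  | plus
  | minus
  | star
deriving DecidableEq

/-- A forward arc is allowed along an edge with this orientation letter. -/
def Orient.fwd : Orient → Prop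
  | Orient.plus => True
  | Orient.minus => False
  | Orient.star => True

/-- A backward arc is allowed along an edge with this orientation letter. -/
def Orient.bwd : Orient → Prop
  | Orient.plus => False
  | Orient.minus => True
  | Orient.star => True

/-- The arc relation of the reflexive digraph cycle on `ZMod m` whose orientation
string is `f`, where `f c` is the orientation of the edge from `c` to `c + 1`. -/
def cycRel {m : ℕ} (f : ZMod m → Orient) (u v : ZMod m) : Prop :=
  u = v ∨ (v = u + 1 ∧ (f u).fwd) ∨ (u = v + 1 ∧ (f v).bwd)

/-- `φ` is a digraph homomorphism. -/
def IsHom {α β : Type*} (rG : α → α → Prop) (rH : β → β → Prop) (φ : α → β) : Prop :=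
  ∀ u v, rG u v → rH (φ u) (φ v)

/-- The arc relation of the Hom-graph `Hom(G,H)`. -/
def HomArc {α β : Type*} (rG : α → α → Prop) (rH : β → β → Prop) (φ ψ : α → β) : Prop :=
  ∀ u v, rG u v → rH (φ u) (ψ v)

/-- `φψ` is an edge of the Hom-graph. -/
def HomEdge {α β : Type*} (rG : α → α → Prop) (rH : β → β → Prop) (φ ψ : α → β) : Prop :=
  HomArc rG rH φ ψ ∨ HomArc rG rH ψ φ

/-- The contribution of the edge `c (c+1)` of `C` to the increase of `φ`:
`1` if increasing, `-1` if decreasing, `0` if stationary. -/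
def edgeVal {m n : ℕ} (φ : ZMod m → ZMod n) (c : ZMod m) : ℤ :=
  if φ (c + 1) = φ c + 1 then 1 else if φ (c + 1) = φ c - 1 then -1 else 0

/-- The increase of a map between cycles: #increasing − #decreasing edges. -/
def increase {m n : ℕ} (φ : ZMod m → ZMod n) : ℤ :=
  ∑ j ∈ Finset.range m, edgeVal φ ((j : ℕ) : ZMod m)

/-- The increase of the subpath `c_a … c_{a+L}`. -/
def partialInc {m n : ℕ} (φ : ZMod m → ZMod n) (a : ZMod m) (L : ℕ) : ℤ :=
  ∑ j ∈ Finset.range L, edgeVal φ (a + ((j : ℕ) : ZMod m))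

/-- `φ` has wind `w`, i.e. its increase is `w * n`. -/
def HasWind {m n : ℕ} (φ : ZMod m → ZMod n) (w : ℤ) : Prop :=
  increase φ = w * (n : ℤ)

/-- A reflexive digraph cycle is non-contractible if it has length at least 4
or is a directed 3-cycle. -/
def NonContractible {n : ℕ} (f : ZMod n → Orient) : Prop :=
  4 ≤ n ∨ (n = 3 ∧ ((∀ i, f i = Orient.plus) ∨ (∀ i, f i = Orient.minus)))

/-- `φ` is increasing: every edge increasing or stationary, not all stationary. -/
def IncMap {m n : ℕ} (φ : ZMod m → ZMod n) : Prop :=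
  (∀ c, φ (c + 1) = φ c + 1 ∨ φ (c + 1) = φ c) ∧ ∃ c, φ (c + 1) = φ c + 1

/-- `φ` is decreasing: every edge decreasing. -/
def DecMap {m n : ℕ} (φ : ZMod m → ZMod n) : Prop :=
  ∀ c, φ (c + 1) = φ c - 1

/-- `φ` is monotone: increasing or decreasing. -/
def MonMap {m n : ℕ} (φ : ZMod m → ZMod n) : Prop :=
  IncMap φ ∨ DecMap φ

/-- `φ` is monotone in the weak sense where constant maps also count. -/
def MonOrConst {m n : ℕ} (φ : ZMod m → ZMod n) : Prop :=
  (∀ c, φ (c + 1) = φ c + 1 ∨ φ (c + 1) = φ c) ∨ DecMap φ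

/-- `Y ≤* X`: `Y` is a `*`-substring of `X`, via a strictly increasing selection
function `α` with `Y i = X (α i)` unless `Y i = *`. -/
def StarSub {p q : ℕ} (Y : Fin p → Orient) (X : Fin q → Orient) : Prop :=
  ∃ α : Fin p → Fin q, StrictMono α ∧ ∀ i, Y i = X (α i) ∨ Y i = Orient.star

/-- The orientation string of the (pointed) cycle `f`. -/
def cycStr {m : ℕ} (f : ZMod m → Orient) : Fin m → Orient :=
  fun j => f ((j : ℕ) : ZMod m)

/-- The orientation string `σ^i(Y^k)` = `(σ^i Y)^k`: the `i`-th shift of the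
`k`-fold concatenation of the string of the cycle `fY`. -/
def shiftPowStr {s : ℕ} (fY : ZMod s → Orient) (k : ℕ) (i : ZMod s) :
    Fin (k * s) → Orient :=
  fun j => fY (i + ((j : ℕ) : ZMod s))

/-- The orientation string `σ^i(Y)^k y_{i+1}` : the `i`-th shift of the `k`-fold
concatenation of the string of `fY`, extended by its own first letter. -/
def shiftPowExtStr {s : ℕ} (fY : ZMod s → Orient) (k : ℕ) (i : ZMod s) :
    Fin (k * s + 1) → Orient :=
  fun j => fY (i + ((j : ℕ) : ZMod s))

/-- Every vertex that moves from `φ` to `ψ`, moves up. -/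
def MovesUpOnly {m n : ℕ} (φ ψ : ZMod m → ZMod n) : Prop :=
  ∀ c, ψ c = φ c ∨ ψ c = φ c + 1

/-- Every vertex that moves from `φ` to `ψ`, moves down. -/
def MovesDownOnly {m n : ℕ} (φ ψ : ZMod m → ZMod n) : Prop :=
  ∀ c, ψ c = φ c ∨ ψ c = φ c - 1

/-- `φψ` is an up edge of the Hom-graph. -/
def UpEdge {m n : ℕ} (rC : ZMod m → ZMod m → Prop) (rD : ZMod n → ZMod n → Prop)
    (φ ψ : ZMod m → ZMod n) : Prop :=
  HomEdge rC rD φ ψ ∧ MovesUpOnly φ ψ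

/-- `φ` and `ψ` are joined by a path (walk) inside the induced subgraph on `S`. -/
def ConnIn {m n : ℕ} (rC : ZMod m → ZMod m → Prop) (rD : ZMod n → ZMod n → Prop)
    (S : Set (ZMod m → ZMod n)) (φ ψ : ZMod m → ZMod n) : Prop :=
  Relation.ReflTransGen (fun a b => a ∈ S ∧ b ∈ S ∧ HomEdge rC rD a b) φ ψ

/-- `ψ` is reachable from `φ` by a path of up edges inside `S`. -/
def UpReachIn {m n : ℕ} (rC : ZMod m → ZMod m → Prop) (rD : ZMod n → ZMod n → Prop)
    (S : Set (ZMod m → ZMod n)) (φ ψ : ZMod m → ZMod n) : Prop :=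
  Relation.ReflTransGen (fun a b => a ∈ S ∧ b ∈ S ∧ UpEdge rC rD a b) φ ψ

/-- One step of a path of up edges between homomorphisms. -/
def UpStep {m n : ℕ} (rC : ZMod m → ZMod m → Prop) (rD : ZMod n → ZMod n → Prop)
    (φ ψ : ZMod m → ZMod n) : Prop :=
  IsHom rC rD φ ∧ IsHom rC rD ψ ∧ UpEdge rC rD φ ψ

/-- The set of vertices on which `φ` and `φ'` differ. -/
def Neq {α β : Type*} (φ φ' : α → β) : Set α := {g | φ g ≠ φ' g}

/-- The map `φ_T`, agreeing with `φ'` on `T` and with `φ` elsewhere. -/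
noncomputable def refineMap {α β : Type*} (φ φ' : α → β) (T : Set α) : α → β :=
  fun g => if g ∈ T then φ' g else φ g

/-- The edge `φφ'` is non-refinable: no nonempty proper subset `T` of `Neq φ φ'`
yields a homomorphism `φ_T`. -/
def NonRefinable {α β : Type*} (rG : α → α → Prop) (rH : β → β → Prop)
    (φ φ' : α → β) : Prop :=
  ¬ ∃ T : Set α, T.Nonempty ∧ T ⊂ Neq φ φ' ∧ IsHom rG rH (refineMap φ φ' T)

/-- `T` is a strong component of the digraph `r`. -/
def IsStrongComponent {α : Type*} (r : α → α → Prop) (T : Set α) : Prop :=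
  T.Nonempty ∧ (∀ u ∈ T, ∀ v ∈ T, Relation.ReflTransGen r u v) ∧
    ∀ T' : Set α, T ⊆ T' → (∀ u ∈ T', ∀ v ∈ T', Relation.ReflTransGen r u v) → T' = T

/-- `T` has no arcs out to vertices not in `T`. -/
def IsTerminal {α : Type*} (r : α → α → Prop) (T : Set α) : Prop :=
  ∀ u ∈ T, ∀ v, r u v → v ∈ T

/-- `Mon_1(C,D;i)`: monotone wind-1 homomorphisms `φ` with `φ c₀ = i`. -/
def Mon1 {m n : ℕ} (fC : ZMod m → Orient) (fD : ZMod n → Orient) (i : ZMod n) :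
    Set (ZMod m → ZMod n) :=
  {φ | IsHom (cycRel fC) (cycRel fD) φ ∧ MonMap φ ∧ increase φ = (n : ℤ) ∧ φ 0 = i}

/-- A one-step up edge: an edge from `φ` obtained by moving all the vertices of a
subpath of `C` mapped to a single vertex `d` up to `d + 1`. -/
def OneStepUp {m n : ℕ} (rC : ZMod m → ZMod m → Prop) (rD : ZMod n → ZMod n → Prop)
    (φ φ' : ZMod m → ZMod n) : Prop :=
  HomEdge rC rD φ φ' ∧
    ∃ (a : ZMod m) (k : ℕ) (d : ZMod n), k < m ∧
      (∀ j : ℕ, j ≤ k → φ (a + ((j : ℕ) : ZMod m)) = d) ∧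
      ∀ c, φ' c = if ∃ j : ℕ, j ≤ k ∧ c = a + ((j : ℕ) : ZMod m) then d + 1 else φ c

/-- The number of increasing edges of `φ` among the first `j` edges of `C`. -/
def incBefore {m n : ℕ} (φ : ZMod m → ZMod n) (j : ℕ) : ℕ :=
  ((Finset.range j).filter fun t =>
    φ (((t : ℕ) : ZMod m) + 1) = φ ((t : ℕ) : ZMod m) + 1).card

/-- One cutback-pushing step: `φ'` is obtained from `φ` by replacing the values of
`φ` on a cutback `c_a … c_{a+L}` by `φ a`. -/
def CutbackStep {m n : ℕ} (φ φ' : ZMod m → ZMod n) : Prop :=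
  ∃ (a : ZMod m) (L : ℕ), L < m ∧ partialInc φ a L = 0 ∧
    (∀ j : ℕ, 0 < j → j < L → partialInc φ a j < 0) ∧
    ∀ c, φ' c = if ∃ j : ℕ, j ≤ L ∧ c = a + ((j : ℕ) : ZMod m) then φ a else φ c

/-- `Mon_1^+(C,D;i)`: wind-1 homomorphisms whose monotone push-up is in `Mon_1(C,D;i)`. -/
def Mon1Plus {m n : ℕ} (fC : ZMod m → Orient) (fD : ZMod n → Orient) (i : ZMod n) :
    Set (ZMod m → ZMod n) :=
  {φ | IsHom (cycRel fC) (cycRel fD) φ ∧ increase φ = (n : ℤ) ∧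
    ∃ ψ ∈ Mon1 fC fD i, Relation.ReflTransGen CutbackStep φ ψ}
section Aux

variable {m n : ℕ}

/-- Basic counting lemma on `Fin`. -/
lemma card_filter_lt_fin (k t : ℕ) (ht : t ≤ k) :
    (Finset.univ.filter fun s : Fin k => (s : ℕ) < t).card = t := by
  rw [Finset.card_filter, Fin.sum_univ_eq_sum_range (fun j => if j < t then 1 else 0),
    ← Finset.card_filter]
  have : Finset.filter (fun i => i < t) (Finset.range k) = Finset.range t := by
    ext j; simp only [Finset.mem_filter, Finset.mem_range]; omega
  rw [this, Finset.card_range]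

lemma zmod_one_ne_zero (hn : 3 ≤ n) : (1 : ZMod n) ≠ 0 := by
  haveI : NeZero n := ⟨by omega⟩
  intro h
  have h1 : ((1 : ℕ) : ZMod n).val = 1 := ZMod.val_cast_of_lt (by omega)
  rw [Nat.cast_one, h, ZMod.val_zero] at h1
  exact absurd h1 (by omega)

lemma zmod_two_ne_zero (hn : 3 ≤ n) : (2 : ZMod n) ≠ 0 := by
  haveI : NeZero n := ⟨by omega⟩
  intro h
  have h1 : ((2 : ℕ) : ZMod n).val = 2 := ZMod.val_cast_of_lt (by omega)
  rw [Nat.cast_ofNat, h, ZMod.val_zero] at h1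
  exact absurd h1 (by omega)

lemma zmod_ne_add_one (hn : 3 ≤ n) (x : ZMod n) : x ≠ x + 1 := by
  intro h
  exact zmod_one_ne_zero hn (by linear_combination -h)

lemma zmod_ne_add_two (hn : 3 ≤ n) (x : ZMod n) : x ≠ x + 1 + 1 := by
  intro h
  exact zmod_two_ne_zero hn (by linear_combination -h)

lemma zmod_ne_sub_one (hn : 3 ≤ n) (x : ZMod n) : x ≠ x - 1 := by
  intro h
  exact zmod_one_ne_zero hn (by linear_combination h)

lemma zmod_add_one_ne_sub_one (hn : 3 ≤ n) (x : ZMod n) : x + 1 ≠ x - 1 := by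
  intro h
  exact zmod_two_ne_zero hn (by linear_combination h)

variable (fC : ZMod m → Orient) (fD : ZMod n → Orient) (i : ZMod n)

/-- A selection function: strictly monotone and letter-compatible. -/
def Sel (α : Fin n → Fin m) : Prop :=
  StrictMono α ∧ ∀ t : Fin n, fD (i + ((t : ℕ) : ZMod n)) = fC (((α t : ℕ) : ZMod m)) ∨
    fD (i + ((t : ℕ) : ZMod n)) = Orient.star

/-- The number of selected positions strictly below `j`. -/
def cnt (α : Fin n → Fin m) (j : ℕ) : ℕ :=
  (Finset.univ.filter fun t : Fin n => (α t : ℕ) < j).card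

/-- The monotone wind-1 map associated to a selection. -/
noncomputable def Phi (α : Fin n → Fin m) (c : ZMod m) : ZMod n :=
  i + ((cnt α (ZMod.val c) : ℕ) : ZMod n)

lemma cnt_zero (α : Fin n → Fin m) : cnt α 0 = 0 := by
  simp [cnt]

lemma cnt_total (α : Fin n → Fin m) : cnt α m = n := by
  have : (Finset.univ.filter fun t : Fin n => (α t : ℕ) < m) = Finset.univ := by
    ext t; simp [(α t).isLt]
  simp [cnt, this]

lemma cnt_succ (α : Fin n → Fin m) (hα : Function.Injective fun t => ((α t : ℕ)))
    (j : ℕ) :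
    cnt α (j + 1) = cnt α j + if ∃ t, (α t : ℕ) = j then 1 else 0 := by
  classical
  rw [cnt, cnt, Finset.card_filter, Finset.card_filter]
  have hsplit : ∀ t : Fin n, (if (α t : ℕ) < j + 1 then 1 else 0)
      = (if (α t : ℕ) < j then 1 else 0) + (if (α t : ℕ) = j then 1 else 0) := by
    intro t
    by_cases h1 : (α t : ℕ) < j <;> by_cases h2 : (α t : ℕ) = j <;>
      simp [h1, h2] <;> omega
  rw [Finset.sum_congr rfl (fun t _ => hsplit t), Finset.sum_add_distrib]
  congr 1
  by_cases h : ∃ t, (α t : ℕ) = j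
  · obtain ⟨t0, ht0⟩ := h
    rw [if_pos ⟨t0, ht0⟩, Finset.sum_eq_single t0]
    · rw [if_pos ht0]
    · intro t _ htne
      rw [if_neg]
      intro he
      exact htne (hα (he.trans ht0.symm))
    · intro habs; exact absurd (Finset.mem_univ t0) habs
  · rw [if_neg h, Finset.sum_eq_zero]
    intro t _
    rw [if_neg (fun he => h ⟨t, he⟩)]

lemma cnt_at (α : Fin n → Fin m) (hα : StrictMono α) (t0 : Fin n) :
    cnt α (α t0 : ℕ) = (t0 : ℕ) := by
  have : (Finset.univ.filter fun t : Fin n => (α t : ℕ) < (α t0 : ℕ))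
      = Finset.univ.filter fun t : Fin n => (t : ℕ) < (t0 : ℕ) := by
    ext t
    simp only [Finset.mem_filter, Finset.mem_univ, true_and]
    rw [← Fin.lt_def, ← Fin.lt_def, hα.lt_iff_lt]
  rw [cnt, this, card_filter_lt_fin _ _ (le_of_lt t0.isLt)]

lemma Phi_step (hm : 3 ≤ m) (hn : 3 ≤ n) (α : Fin n → Fin m) (hα : StrictMono α)
    (c : ZMod m) :
    Phi i α (c + 1) = Phi i α c + if ∃ t, (α t : ℕ) = c.val then 1 else 0 := by
  classical
  haveI : NeZero m := ⟨by omega⟩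
  haveI : NeZero n := ⟨by omega⟩
  have hinj : Function.Injective fun t => ((α t : ℕ)) :=
    fun a b h => hα.injective (Fin.val_injective h)
  have hc : c = ((c.val : ℕ) : ZMod m) := (ZMod.natCast_rightInverse c).symm
  have hvlt : c.val < m := ZMod.val_lt c
  have hite : (if ∃ t, (α t : ℕ) = c.val then (1 : ZMod n) else 0)
      = (((if ∃ t, (α t : ℕ) = c.val then 1 else 0 : ℕ)) : ZMod n) := by
    by_cases h : ∃ t, (α t : ℕ) = c.val <;> simp [h]
  have hkey : cnt α (c.val + 1) = cnt α c.val + if ∃ t, (α t : ℕ) = c.val then 1 else 0 :=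
    cnt_succ α hinj c.val
  by_cases hlast : c.val + 1 < m
  · have h1 : c + 1 = (((c.val + 1 : ℕ)) : ZMod m) := by
      rw [Nat.cast_add, Nat.cast_one, ← hc]
    have h2 : (c + 1).val = c.val + 1 := by
      rw [h1, ZMod.val_cast_of_lt hlast]
    rw [Phi, Phi, h2, hkey, hite]
    push_cast
    ring
  · have hm1 : c.val + 1 = m := by omega
    have h1 : c + 1 = 0 := by
      rw [hc]
      have : (((c.val + 1 : ℕ)) : ZMod m) = ((m : ℕ) : ZMod m) := by rw [hm1]
      push_cast at this ⊢
      rw [this, ZMod.natCast_self]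
    have h2 : cnt α c.val + (if ∃ t, (α t : ℕ) = c.val then 1 else 0) = n := by
      rw [← hkey, hm1, cnt_total]
    rw [h1, Phi, Phi, ZMod.val_zero, cnt_zero, hite]
    rw [Nat.cast_zero, add_zero, add_assoc, ← Nat.cast_add, h2, ZMod.natCast_self, add_zero]

lemma Phi_jump_exists (hm : 3 ≤ m) (hn : 3 ≤ n) (α : Fin n → Fin m) (hα : StrictMono α)
    (t : Fin n) :
    Phi i α (((α t : ℕ) : ZMod m) + 1) = Phi i α (((α t : ℕ) : ZMod m)) + 1 := by
  haveI : NeZero m := ⟨by omega⟩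
  have hv : (((α t : ℕ) : ZMod m)).val = (α t : ℕ) := ZMod.val_cast_of_lt (α t).isLt
  rw [Phi_step i hm hn α hα, hv, if_pos ⟨t, rfl⟩]

lemma Phi_mem_Mon1 (hm : 3 ≤ m) (hn : 3 ≤ n) {α : Fin n → Fin m}
    (hα : Sel fC fD i α) : Phi i α ∈ Mon1 fC fD i := by
  classical
  haveI : NeZero m := ⟨by omega⟩
  haveI : NeZero n := ⟨by omega⟩
  obtain ⟨hmono, hcomp⟩ := hα
  have hinj : Function.Injective fun t => ((α t : ℕ)) :=
    fun a b h => hmono.injective (Fin.val_injective h)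
  -- step behaviour
  have hstep := Phi_step i hm hn α hmono
  have hzero : Phi i α 0 = i := by
    rw [Phi, ZMod.val_zero, cnt_zero, Nat.cast_zero, add_zero]
  have hIncMap : IncMap (Phi i α) := by
    constructor
    · intro c
      rw [hstep c]
      by_cases h : ∃ t, (α t : ℕ) = c.val
      · rw [if_pos h]; exact Or.inl rfl
      · rw [if_neg h, add_zero]; exact Or.inr rfl
    · have hn0 : 0 < n := by omega
      refine ⟨((α ⟨0, hn0⟩ : ℕ) : ZMod m), ?_⟩
      exact Phi_jump_exists i hm hn α hmono ⟨0, hn0⟩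
  -- the value at a jump position: `Phi` at `α t` equals `i + t`
  have hval : ∀ t : Fin n, Phi i α (((α t : ℕ) : ZMod m)) = i + ((t : ℕ) : ZMod n) := by
    intro t
    rw [Phi, ZMod.val_cast_of_lt (α t).isLt, cnt_at α hmono]
  -- homomorphism property
  have hhom : IsHom (cycRel fC) (cycRel fD) (Phi i α) := by
    intro u v hr
    rcases hr with h | ⟨hv, hfwd⟩ | ⟨hu, hbwd⟩
    · exact Or.inl (congrArg _ h)
    · subst hv
      by_cases h : ∃ t, (α t : ℕ) = u.val
      · obtain ⟨t, ht⟩ := h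
        have hjump : Phi i α (u + 1) = Phi i α u + 1 := by
          rw [hstep u, if_pos ⟨t, ht⟩]
        have hu' : ((α t : ℕ) : ZMod m) = u := by
          rw [ht]; exact ZMod.natCast_rightInverse u
        have hphiu : Phi i α u = i + ((t : ℕ) : ZMod n) := by
          rw [← hu']; exact hval t
        have hfd : (fD (Phi i α u)).fwd := by
          rw [hphiu]
          rcases hcomp t with h' | h'
          · rw [h', hu']; exact hfwd
          · rw [h']; trivial
        exact Or.inr (Or.inl ⟨hjump, hfd⟩)
      · have : Phi i α (u + 1) = Phi i α u := by rw [hstep u, if_neg h, add_zero]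
        exact Or.inl this.symm
    · subst hu
      by_cases h : ∃ t, (α t : ℕ) = v.val
      · obtain ⟨t, ht⟩ := h
        have hjump : Phi i α (v + 1) = Phi i α v + 1 := by
          rw [hstep v, if_pos ⟨t, ht⟩]
        have hv' : ((α t : ℕ) : ZMod m) = v := by
          rw [ht]; exact ZMod.natCast_rightInverse v
        have hphiv : Phi i α v = i + ((t : ℕ) : ZMod n) := by
          rw [← hv']; exact hval t
        have hfd : (fD (Phi i α v)).bwd := by
          rw [hphiv]
          rcases hcomp t with h' | h'
          · rw [h', hv']; exact hbwd
          · rw [h']; trivial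
        exact Or.inr (Or.inr ⟨hjump, hfd⟩)
      · have : Phi i α (v + 1) = Phi i α v := by rw [hstep v, if_neg h, add_zero]
        exact Or.inl this
  -- increase
  have hedge : ∀ j, j < m → edgeVal (Phi i α) ((j : ℕ) : ZMod m)
      = if ∃ t, (α t : ℕ) = j then 1 else 0 := by
    intro j hj
    have hv : (((j : ℕ)) : ZMod m).val = j := ZMod.val_cast_of_lt hj
    by_cases h : ∃ t, (α t : ℕ) = j
    · have : Phi i α (((j : ℕ) : ZMod m) + 1) = Phi i α ((j : ℕ) : ZMod m) + 1 := by
        rw [hstep, hv, if_pos h]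
      rw [edgeVal, if_pos this, if_pos h]
    · have h0 : Phi i α (((j : ℕ) : ZMod m) + 1) = Phi i α ((j : ℕ) : ZMod m) := by
        rw [hstep, hv, if_neg h, add_zero]
      rw [edgeVal, if_neg, if_neg, if_neg h]
      · rw [h0]; exact zmod_ne_sub_one hn _
      · rw [h0]; exact zmod_ne_add_one hn _
  have hinc : increase (Phi i α) = (n : ℤ) := by
    rw [increase]
    have : ∀ j ∈ Finset.range m, edgeVal (Phi i α) ((j : ℕ) : ZMod m)
        = if ∃ t, (α t : ℕ) = j then 1 else 0 := by
      intro j hj; exact hedge j (Finset.mem_range.1 hj)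
    rw [Finset.sum_congr rfl this]
    have hfil : (Finset.range m).filter (fun j => ∃ t, (α t : ℕ) = j)
        = Finset.univ.image (fun t => (α t : ℕ)) := by
      ext j
      simp only [Finset.mem_filter, Finset.mem_range, Finset.mem_image, Finset.mem_univ,
        true_and]
      constructor
      · rintro ⟨_, t, ht⟩; exact ⟨t, ht⟩
      · rintro ⟨t, ht⟩; exact ⟨ht ▸ (α t).isLt, t, ht⟩
    rw [Finset.sum_boole, hfil, Finset.card_image_of_injective _ hinj, Finset.card_univ,
      Fintype.card_fin]
  exact ⟨hhom, Or.inl hIncMap, hinc, hzero⟩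

lemma Mon1_exists_sel (hm : 3 ≤ m) (hn : 3 ≤ n) {φ : ZMod m → ZMod n}
    (hφ : φ ∈ Mon1 fC fD i) : ∃ α, Sel fC fD i α ∧ φ = Phi i α := by
  classical
  haveI : NeZero m := ⟨by omega⟩
  haveI : NeZero n := ⟨by omega⟩
  obtain ⟨hhom, hmon, hinc, h0⟩ := hφ
  have hIncMap : IncMap φ := by
    rcases hmon with h | hdec
    · exact h
    · exfalso
      have hev : ∀ j ∈ Finset.range m, edgeVal φ ((j : ℕ) : ZMod m) = -1 := by
        intro j _
        have h1 := hdec ((j : ℕ) : ZMod m)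
        rw [edgeVal, if_neg (by rw [h1]; exact (zmod_add_one_ne_sub_one hn _).symm),
          if_pos h1]
      rw [increase, Finset.sum_congr rfl hev, Finset.sum_const, Finset.card_range] at hinc
      rw [nsmul_eq_mul, mul_neg, mul_one] at hinc
      omega
  set A : Finset ℕ := (Finset.range m).filter
    (fun j => φ (((j : ℕ) : ZMod m) + 1) = φ ((j : ℕ) : ZMod m) + 1) with hA
  have hAmem : ∀ j : ℕ, j ∈ A ↔ j < m ∧ φ (((j : ℕ) : ZMod m) + 1) = φ ((j : ℕ) : ZMod m) + 1 := by
    intro j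
    rw [hA, Finset.mem_filter, Finset.mem_range]
  have hedge : ∀ j ∈ Finset.range m, edgeVal φ ((j : ℕ) : ZMod m)
      = if j ∈ A then 1 else 0 := by
    intro j hj
    by_cases h : φ (((j : ℕ) : ZMod m) + 1) = φ ((j : ℕ) : ZMod m) + 1
    · rw [edgeVal, if_pos h, if_pos ((hAmem j).2 ⟨Finset.mem_range.1 hj, h⟩)]
    · have hst : φ (((j : ℕ) : ZMod m) + 1) = φ ((j : ℕ) : ZMod m) :=
        (hIncMap.1 _).resolve_left h
      rw [edgeVal, if_neg h, if_neg (by rw [hst]; exact zmod_ne_sub_one hn _),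
        if_neg (fun hmem => h ((hAmem j).1 hmem).2)]
  have hcard : A.card = n := by
    have h1 : increase φ = (A.card : ℤ) := by
      rw [increase, Finset.sum_congr rfl hedge, Finset.sum_boole]
      have hfe : (Finset.range m).filter (fun j => j ∈ A) = A := by
        ext j
        simp only [Finset.mem_filter, Finset.mem_range]
        exact ⟨fun h => h.2, fun h => ⟨((hAmem j).1 h).1, h⟩⟩
      rw [hfe]
    rw [hinc] at h1
    exact_mod_cast h1.symm
  set e := A.orderIsoOfFin hcard with he
  have hmemA : ∀ x ∈ A, x < m := fun x hx => ((hAmem x).1 hx).1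
  set α : Fin n → Fin m := fun t => ⟨((e t : ℕ)), hmemA _ (e t).2⟩ with hαdef
  have hmono : StrictMono α := by
    intro a b h
    rw [hαdef]
    exact Fin.mk_lt_mk.2 (e.strictMono h)
  have hrange : ∀ j, j ∈ A ↔ ∃ t, (α t : ℕ) = j := by
    intro j
    constructor
    · intro hj
      refine ⟨e.symm ⟨j, hj⟩, ?_⟩
      show ((e (e.symm ⟨j, hj⟩) : ℕ)) = j
      rw [OrderIso.apply_symm_apply]
    · rintro ⟨t, ht⟩
      exact ht ▸ (e t).2
  have hinj : Function.Injective fun t => ((α t : ℕ)) :=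
    fun a b h => hmono.injective (Fin.val_injective h)
  have hval : ∀ j, j < m → φ ((j : ℕ) : ZMod m) = i + ((cnt α j : ℕ) : ZMod n) := by
    intro j
    induction j with
    | zero =>
      intro _
      rw [Nat.cast_zero, h0, cnt_zero, Nat.cast_zero, add_zero]
    | succ j ih =>
      intro hj
      have hjm : j < m := by omega
      have hcast : ((j + 1 : ℕ) : ZMod m) = ((j : ℕ) : ZMod m) + 1 := by push_cast; ring
      have hc : cnt α (j + 1) = cnt α j + if ∃ t, (α t : ℕ) = j then 1 else 0 :=
        cnt_succ α hinj j
      by_cases hjA : j ∈ A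
      · have hjump : φ (((j : ℕ) : ZMod m) + 1) = φ ((j : ℕ) : ZMod m) + 1 :=
          ((hAmem j).1 hjA).2
        rw [hcast, hjump, ih hjm, hc, if_pos ((hrange j).1 hjA)]
        push_cast; ring
      · have hst : φ (((j : ℕ) : ZMod m) + 1) = φ ((j : ℕ) : ZMod m) := by
          rcases hIncMap.1 ((j : ℕ) : ZMod m) with h | h
          · exact absurd ((hAmem j).2 ⟨hjm, h⟩) hjA
          · exact h
        rw [hcast, hst, ih hjm, hc, if_neg (fun hex => hjA ((hrange j).2 hex))]
        push_cast; ring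
  have hφeq : φ = Phi i α := by
    funext c
    have h1 : φ c = φ ((c.val : ℕ) : ZMod m) := by rw [ZMod.natCast_rightInverse c]
    rw [h1, hval c.val (ZMod.val_lt c)]
    rfl
  refine ⟨α, ⟨hmono, ?_⟩, hφeq⟩
  intro t
  set u : ZMod m := ((α t : ℕ) : ZMod m) with hu
  have hαA : ((α t : ℕ)) ∈ A := (hrange _).2 ⟨t, rfl⟩
  have hjump : φ (u + 1) = φ u + 1 := ((hAmem _).1 hαA).2
  have hφu : φ u = i + ((t : ℕ) : ZMod n) := by
    rw [hu, hval _ (α t).isLt, cnt_at α hmono t]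
  cases hfc : fC u with
  | plus =>
    have harc := hhom u (u + 1) (Or.inr (Or.inl ⟨rfl, by rw [hfc]; trivial⟩))
    rw [hjump] at harc
    have hfwd : (fD (φ u)).fwd := by
      rcases harc with h | ⟨h, hf⟩ | ⟨h, _⟩
      · exact absurd h (zmod_ne_add_one hn _)
      · exact hf
      · exact absurd h (zmod_ne_add_two hn _)
    rw [hφu] at hfwd
    cases hfd : fD (i + ((t : ℕ) : ZMod n)) with
    | plus => left; rfl
    | minus => rw [hfd] at hfwd; exact hfwd.elim
    | star => right; rfl
  | minus =>
    have harc := hhom (u + 1) u (Or.inr (Or.inr ⟨rfl, by rw [hfc]; trivial⟩))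
    rw [hjump] at harc
    have hbwd : (fD (φ u)).bwd := by
      rcases harc with h | ⟨h, _⟩ | ⟨h, hb⟩
      · exact absurd h.symm (zmod_ne_add_one hn _)
      · exact absurd h (zmod_ne_add_two hn _)
      · exact hb
    rw [hφu] at hbwd
    cases hfd : fD (i + ((t : ℕ) : ZMod n)) with
    | plus => rw [hfd] at hbwd; exact hbwd.elim
    | minus => left; rfl
    | star => right; rfl
  | star =>
    have harc1 := hhom u (u + 1) (Or.inr (Or.inl ⟨rfl, by rw [hfc]; trivial⟩))
    have harc2 := hhom (u + 1) u (Or.inr (Or.inr ⟨rfl, by rw [hfc]; trivial⟩))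
    rw [hjump] at harc1 harc2
    have hfwd : (fD (φ u)).fwd := by
      rcases harc1 with h | ⟨h, hf⟩ | ⟨h, _⟩
      · exact absurd h (zmod_ne_add_one hn _)
      · exact hf
      · exact absurd h (zmod_ne_add_two hn _)
    have hbwd : (fD (φ u)).bwd := by
      rcases harc2 with h | ⟨h, _⟩ | ⟨h, hb⟩
      · exact absurd h.symm (zmod_ne_add_one hn _)
      · exact absurd h (zmod_ne_add_two hn _)
      · exact hb
    rw [hφu] at hfwd hbwd
    cases hfd : fD (i + ((t : ℕ) : ZMod n)) with
    | plus => rw [hfd] at hbwd; exact hbwd.elim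
    | minus => rw [hfd] at hfwd; exact hfwd.elim
    | star => right; rfl

lemma oneStep_of_single_move (hm : 3 ≤ m) (hn : 3 ≤ n) {α β : Fin n → Fin m}
    (hα : Sel fC fD i α) (hβ : Sel fC fD i β) (t0 : Fin n)
    (heq : ∀ t, t ≠ t0 → α t = β t) (hlt : (β t0 : ℕ) < (α t0 : ℕ)) :
    OneStepUp (cycRel fC) (cycRel fD) (Phi i α) (Phi i β) := by
  classical
  haveI : NeZero m := ⟨by omega⟩
  haveI : NeZero n := ⟨by omega⟩
  set p : ℕ := (α t0 : ℕ) with hp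
  set q : ℕ := (β t0 : ℕ) with hq
  have hpm : p < m := (α t0).isLt
  have hlow : ∀ t : Fin n, t < t0 → (α t : ℕ) < q ∧ (β t : ℕ) < q := by
    intro t ht
    have h1 : (β t : ℕ) < q := hβ.1 ht
    have h2 : α t = β t := heq t (ne_of_lt ht)
    exact ⟨h2 ▸ h1, h1⟩
  have hhigh : ∀ t : Fin n, t0 < t → p < (α t : ℕ) ∧ p < (β t : ℕ) := by
    intro t ht
    have h1 : p < (α t : ℕ) := hα.1 ht
    have h2 : α t = β t := heq t (ne_of_gt ht)
    exact ⟨h1, h2 ▸ h1⟩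
  -- counting facts
  have hcα_mid : ∀ v : ℕ, q ≤ v → v ≤ p → cnt α v = (t0 : ℕ) := by
    intro v hv1 hv2
    have hset : (Finset.univ.filter fun t : Fin n => (α t : ℕ) < v)
        = Finset.univ.filter fun t : Fin n => (t : ℕ) < (t0 : ℕ) := by
      ext t
      simp only [Finset.mem_filter, Finset.mem_univ, true_and]
      rcases lt_trichotomy t t0 with h | h | h
      · have h1 := (hlow t h).1
        have h2 : (t : ℕ) < (t0 : ℕ) := h
        exact ⟨fun _ => h2, fun _ => by omega⟩
      · subst h
        rw [← hp]
        exact ⟨fun hc => by omega, fun hc => by omega⟩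
      · have h1 := (hhigh t h).1
        have h2 : (t0 : ℕ) < (t : ℕ) := h
        exact ⟨fun hc => by omega, fun hc => by omega⟩
    rw [cnt, hset, card_filter_lt_fin _ _ (le_of_lt t0.isLt)]
  have hcβ_mid : ∀ v : ℕ, q < v → v ≤ p → cnt β v = (t0 : ℕ) + 1 := by
    intro v hv1 hv2
    have hset : (Finset.univ.filter fun t : Fin n => (β t : ℕ) < v)
        = Finset.univ.filter fun t : Fin n => (t : ℕ) < (t0 : ℕ) + 1 := by
      ext t
      simp only [Finset.mem_filter, Finset.mem_univ, true_and]
      rcases lt_trichotomy t t0 with h | h | h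
      · have h1 := (hlow t h).2
        have h2 : (t : ℕ) < (t0 : ℕ) := h
        exact ⟨fun _ => by omega, fun _ => by omega⟩
      · subst h
        rw [← hq]
        exact ⟨fun _ => by omega, fun _ => by omega⟩
      · have h1 := (hhigh t h).2
        have h2 : (t0 : ℕ) < (t : ℕ) := h
        exact ⟨fun hc => by omega, fun hc => by omega⟩
    rw [cnt, hset, card_filter_lt_fin _ _ t0.isLt]
  have hcnt_eq : ∀ v : ℕ, v ≤ q ∨ p < v → cnt β v = cnt α v := by
    intro v hv
    have hset : (Finset.univ.filter fun t : Fin n => (β t : ℕ) < v)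
        = Finset.univ.filter fun t : Fin n => (α t : ℕ) < v := by
      ext t
      simp only [Finset.mem_filter, Finset.mem_univ, true_and]
      by_cases h : t = t0
      · subst h
        rw [← hp, ← hq]
        rcases hv with hv | hv
        · exact ⟨fun hc => by omega, fun hc => by omega⟩
        · exact ⟨fun _ => by omega, fun _ => by omega⟩
      · rw [heq t h]
    rw [cnt, cnt, hset]
  have hjumpchar : ∀ w : ℕ, q ≤ w → w < p → ¬ ∃ t : Fin n, (α t : ℕ) = w := by
    rintro w hw1 hw2 ⟨t, ht⟩
    rcases lt_trichotomy t t0 with h | h | h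
    · have := (hlow t h).1; omega
    · subst h; rw [← hp] at ht; omega
    · have := (hhigh t h).1; omega
  -- value facts
  have hφ_in : ∀ c : ZMod m, q ≤ c.val → c.val ≤ p →
      Phi i α c = i + (((t0 : ℕ) : ℕ) : ZMod n) := by
    intro c h1 h2
    rw [Phi, hcα_mid c.val h1 h2]
  have hψ_in : ∀ c : ZMod m, q + 1 ≤ c.val → c.val ≤ p →
      Phi i β c = (i + (((t0 : ℕ) : ℕ) : ZMod n)) + 1 := by
    intro c h1 h2
    rw [Phi, hcβ_mid c.val (by omega) h2]
    push_cast
    ring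
  have hψ_out : ∀ c : ZMod m, ¬(q + 1 ≤ c.val ∧ c.val ≤ p) → Phi i β c = Phi i α c := by
    intro c hc
    rw [Phi, Phi, hcnt_eq c.val (by omega)]
  set d : ZMod n := i + (((t0 : ℕ) : ℕ) : ZMod n) with hd
  set a : ZMod m := ((q + 1 : ℕ) : ZMod m) with ha
  set k : ℕ := p - q - 1 with hk
  -- the subpath
  have haj : ∀ j : ℕ, j ≤ k → a + ((j : ℕ) : ZMod m) = ((q + 1 + j : ℕ) : ZMod m) := by
    intro j _
    rw [ha]
    push_cast
    ring
  have hajval : ∀ j : ℕ, j ≤ k → (a + ((j : ℕ) : ZMod m)).val = q + 1 + j := by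
    intro j hj
    rw [haj j hj, ZMod.val_cast_of_lt (by omega)]
  have hP : ∀ c : ZMod m, (∃ j : ℕ, j ≤ k ∧ c = a + ((j : ℕ) : ZMod m))
      ↔ (q + 1 ≤ c.val ∧ c.val ≤ p) := by
    intro c
    constructor
    · rintro ⟨j, hj, rfl⟩
      rw [hajval j hj]
      omega
    · rintro ⟨h1, h2⟩
      refine ⟨c.val - (q + 1), by omega, ?_⟩
      rw [haj _ (by omega)]
      have : q + 1 + (c.val - (q + 1)) = c.val := by omega
      rw [this, ZMod.natCast_rightInverse c]
  -- steps of Phi i α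
  have hstepα := Phi_step i hm hn α hα.1
  have hstat : ∀ c : ZMod m, q ≤ c.val → c.val < p → Phi i α (c + 1) = Phi i α c := by
    intro c h1 h2
    rw [hstepα c, if_neg (hjumpchar c.val h1 h2), add_zero]
  have hjp : ∀ c : ZMod m, c.val = p → Phi i α (c + 1) = Phi i α c + 1 := by
    intro c hc
    rw [hstepα c, if_pos ⟨t0, by rw [← hp, hc]⟩]
  have hsucc : ∀ u : ZMod m, 1 ≤ (u + 1).val → (u + 1).val = u.val + 1 := by
    intro u h1
    have he : u + 1 = ((u.val + 1 : ℕ) : ZMod m) := by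
      rw [Nat.cast_add, Nat.cast_one, ZMod.natCast_rightInverse u]
    have hval : (u + 1).val = (u.val + 1) % m := by rw [he, ZMod.val_natCast]
    have hu : u.val < m := ZMod.val_lt u
    rcases Nat.lt_or_ge (u.val + 1) m with h | h
    · rw [hval, Nat.mod_eq_of_lt h]
    · have hh : u.val + 1 = m := by omega
      rw [hval, hh, Nat.mod_self] at h1
      omega
  have homα : IsHom (cycRel fC) (cycRel fD) (Phi i α) :=
    (Phi_mem_Mon1 fC fD i hm hn hα).1
  constructor
  · -- HomEdge
    have harc_fwd : (fD d).fwd →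
        HomArc (cycRel fC) (cycRel fD) (Phi i α) (Phi i β) := by
      intro hdfwd u v hr
      rcases hr with h | ⟨hv, hf⟩ | ⟨hu2, hb⟩
      · subst h
        by_cases hPv : q + 1 ≤ u.val ∧ u.val ≤ p
        · rw [hψ_in u hPv.1 hPv.2, hφ_in u (by omega) hPv.2]
          exact Or.inr (Or.inl ⟨rfl, hdfwd⟩)
        · rw [hψ_out u hPv]
          exact Or.inl rfl
      · subst hv
        by_cases hPv : q + 1 ≤ (u + 1).val ∧ (u + 1).val ≤ p
        · have husucc : (u + 1).val = u.val + 1 := hsucc u (by omega)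
          rw [hψ_in _ hPv.1 hPv.2, hφ_in u (by omega) (by omega)]
          exact Or.inr (Or.inl ⟨rfl, hdfwd⟩)
        · rw [hψ_out _ hPv]
          exact homα u (u + 1) (Or.inr (Or.inl ⟨rfl, hf⟩))
      · subst hu2
        by_cases hPv : q + 1 ≤ v.val ∧ v.val ≤ p
        · rw [hψ_in v hPv.1 hPv.2]
          by_cases hvp : v.val = p
          · rw [hjp v hvp, hφ_in v (by omega) hPv.2]
            exact Or.inl rfl
          · rw [hstat v (by omega) (by omega), hφ_in v (by omega) hPv.2]
            exact Or.inr (Or.inl ⟨rfl, hdfwd⟩)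
        · rw [hψ_out v hPv]
          exact homα (v + 1) v (Or.inr (Or.inr ⟨rfl, hb⟩))
    have harc_bwd : (fD d).bwd →
        HomArc (cycRel fC) (cycRel fD) (Phi i β) (Phi i α) := by
      intro hdbwd u v hr
      rcases hr with h | ⟨hv, hf⟩ | ⟨hu2, hb⟩
      · subst h
        by_cases hPv : q + 1 ≤ u.val ∧ u.val ≤ p
        · rw [hψ_in u hPv.1 hPv.2, hφ_in u (by omega) hPv.2]
          exact Or.inr (Or.inr ⟨rfl, hdbwd⟩)
        · rw [hψ_out u hPv]
          exact Or.inl rfl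
      · subst hv
        by_cases hPu : q + 1 ≤ u.val ∧ u.val ≤ p
        · rw [hψ_in u hPu.1 hPu.2]
          by_cases hup : u.val = p
          · rw [hjp u hup, hφ_in u (by omega) hPu.2]
            exact Or.inl rfl
          · rw [hstat u (by omega) (by omega), hφ_in u (by omega) hPu.2]
            exact Or.inr (Or.inr ⟨rfl, hdbwd⟩)
        · rw [hψ_out u hPu]
          exact homα u (u + 1) (Or.inr (Or.inl ⟨rfl, hf⟩))
      · subst hu2
        by_cases hPv : q + 1 ≤ (v + 1).val ∧ (v + 1).val ≤ p
        · have hvsucc : (v + 1).val = v.val + 1 := hsucc v (by omega)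
          rw [hψ_in _ hPv.1 hPv.2, hφ_in v (by omega) (by omega)]
          exact Or.inr (Or.inr ⟨rfl, hdbwd⟩)
        · rw [hψ_out _ hPv]
          exact homα (v + 1) v (Or.inr (Or.inr ⟨rfl, hb⟩))
    cases hfdd : fD d with
    | plus => exact Or.inl (harc_fwd (by rw [hfdd]; trivial))
    | star => exact Or.inl (harc_fwd (by rw [hfdd]; trivial))
    | minus => exact Or.inr (harc_bwd (by rw [hfdd]; trivial))
  · refine ⟨a, k, d, by omega, ?_, ?_⟩
    · intro j hj
      have hv := hajval j hj
      exact hφ_in _ (by omega) (by omega)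
    · intro c
      by_cases h : ∃ j : ℕ, j ≤ k ∧ c = a + ((j : ℕ) : ZMod m)
      · rw [if_pos h]
        have := (hP c).1 h
        exact hψ_in c this.1 this.2
      · rw [if_neg h]
        exact hψ_out c (fun hc => h ((hP c).2 hc))

lemma upPath (hm : 3 ≤ m) (hn : 3 ≤ n) {α β : Fin n → Fin m}
    (hα : Sel fC fD i α) (hβ : Sel fC fD i β) (hle : ∀ t, β t ≤ α t) :
    Relation.ReflTransGen (fun a b => a ∈ Mon1 fC fD i ∧ b ∈ Mon1 fC fD i ∧
      OneStepUp (cycRel fC) (cycRel fD) a b) (Phi i α) (Phi i β) := by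
  classical
  set δ : ℕ → Fin n → Fin m := fun s t => if (t : ℕ) < s then β t else α t with hδ
  have hδSel : ∀ s, Sel fC fD i (δ s) := by
    intro s
    constructor
    · intro t t' h
      have htt' : (t : ℕ) < (t' : ℕ) := h
      by_cases h1 : (t : ℕ) < s <;> by_cases h2 : (t' : ℕ) < s
      · simp only [hδ, if_pos h1, if_pos h2]
        exact hβ.1 h
      · simp only [hδ, if_pos h1, if_neg h2]
        exact lt_of_lt_of_le (hβ.1 h) (hle t')
      · omega
      · simp only [hδ, if_neg h1, if_neg h2]
        exact hα.1 h
    · intro t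
      by_cases h1 : (t : ℕ) < s
      · simp only [hδ, if_pos h1]
        exact hβ.2 t
      · simp only [hδ, if_neg h1]
        exact hα.2 t
  have hδ0 : δ 0 = α := by
    funext t; simp [hδ]
  have hδn : ∀ s, n ≤ s → δ s = β := by
    intro s hs; funext t; simp [hδ, lt_of_lt_of_le t.isLt hs]
  have key : ∀ s, Relation.ReflTransGen (fun a b => a ∈ Mon1 fC fD i ∧ b ∈ Mon1 fC fD i ∧
      OneStepUp (cycRel fC) (cycRel fD) a b) (Phi i α) (Phi i (δ s)) := by
    intro s
    induction s with
    | zero =>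
      rw [hδ0]
    | succ s ih =>
      by_cases hsn : s < n
      · by_cases hcase : α ⟨s, hsn⟩ = β ⟨s, hsn⟩
        · have hde : δ (s + 1) = δ s := by
            funext t
            simp only [hδ]
            by_cases h1 : (t : ℕ) < s
            · rw [if_pos (by omega), if_pos h1]
            · by_cases h2 : (t : ℕ) = s
              · have ht : t = ⟨s, hsn⟩ := Fin.ext h2
                subst ht
                rw [if_pos (by simp), if_neg (by simp), hcase]
              · rw [if_neg (by omega), if_neg (by omega)]
          rw [hde]; exact ih
        · have hblt : β ⟨s, hsn⟩ < α ⟨s, hsn⟩ :=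
            lt_of_le_of_ne (hle _) (fun hc => hcase hc.symm)
          have hlt2 : (δ (s + 1) ⟨s, hsn⟩ : ℕ) < (δ s ⟨s, hsn⟩ : ℕ) := by
            simp only [hδ]
            rw [if_pos (by simp), if_neg (by simp)]
            exact hblt
          refine ih.tail ⟨Phi_mem_Mon1 fC fD i hm hn (hδSel s),
            Phi_mem_Mon1 fC fD i hm hn (hδSel (s + 1)),
            oneStep_of_single_move fC fD i hm hn (hδSel s) (hδSel (s + 1)) ⟨s, hsn⟩
              ?_ hlt2⟩
          intro t ht
          have hts : (t : ℕ) ≠ s := fun hc => ht (Fin.ext hc)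
          simp only [hδ]
          by_cases h1 : (t : ℕ) < s
          · rw [if_pos h1, if_pos (by omega)]
          · rw [if_neg h1, if_neg (by omega)]
      · have h1 : δ (s + 1) = β := hδn _ (by omega)
        have h2 : δ s = β := hδn _ (by omega)
        rw [h1, ← h2]
        exact ih
  have hfin := key n
  rwa [hδn n le_rfl] at hfin

lemma sel_inf {α β : Fin n → Fin m} (hα : Sel fC fD i α) (hβ : Sel fC fD i β) :
    Sel fC fD i (α ⊓ β) := by
  constructor
  · intro t t' h
    simp only [Pi.inf_apply]
    exact lt_min (lt_of_le_of_lt inf_le_left (hα.1 h))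
      (lt_of_le_of_lt inf_le_right (hβ.1 h))
  · intro t
    simp only [Pi.inf_apply]
    rcases le_total (α t) (β t) with h | h
    · rw [inf_eq_left.2 h]; exact hα.2 t
    · rw [inf_eq_right.2 h]; exact hβ.2 t

lemma sel_sup {α β : Fin n → Fin m} (hα : Sel fC fD i α) (hβ : Sel fC fD i β) :
    Sel fC fD i (α ⊔ β) := by
  constructor
  · intro t t' h
    simp only [Pi.sup_apply]
    exact max_lt (lt_of_lt_of_le (hα.1 h) le_sup_left)
      (lt_of_lt_of_le (hβ.1 h) le_sup_right)
  · intro t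
    simp only [Pi.sup_apply]
    rcases le_total (α t) (β t) with h | h
    · rw [sup_eq_right.2 h]; exact hβ.2 t
    · rw [sup_eq_left.2 h]; exact hα.2 t

lemma sel_nonempty (hsub : StarSub (shiftPowStr fD 1 i) (cycStr fC)) :
    ∃ α, Sel fC fD i α := by
  obtain ⟨α', hmono, hcomp⟩ := hsub
  refine ⟨fun t => α' (Fin.cast (one_mul n).symm t), ?_, ?_⟩
  · intro t t' h
    apply hmono
    rw [Fin.lt_def, Fin.coe_cast, Fin.coe_cast]
    exact h
  · intro t
    have := hcomp (Fin.cast (one_mul n).symm t)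
    simpa [shiftPowStr, cycStr] using this
end Aux

/-- if `σ^i(D) ≤* C` then `Mon_1(C,D;i)` is connected, and there are
elements `Φ_i^m` and `Φ_i^M` of `Mon_1(C,D;i)` such that every `φ ∈ Mon_1(C,D;i)` is
reachable from `Φ_i^m`, and reaches `Φ_i^M`, by a path of monotone one-step up
edges. -/
theorem mon_one_connected (m n : ℕ) (hm : 3 ≤ m)
    (fC : ZMod m → Orient) (fD : ZMod n → Orient) (hD : NonContractible fD)
    (i : ZMod n) (hsub : StarSub (shiftPowStr fD 1 i) (cycStr fC)) :
    (∀ φ ∈ Mon1 fC fD i, ∀ ψ ∈ Mon1 fC fD i,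
      ConnIn (cycRel fC) (cycRel fD) (Mon1 fC fD i) φ ψ) ∧
    ∃ Φm ∈ Mon1 fC fD i, ∃ ΦM ∈ Mon1 fC fD i, ∀ φ ∈ Mon1 fC fD i,
      Relation.ReflTransGen
        (fun a b => a ∈ Mon1 fC fD i ∧ b ∈ Mon1 fC fD i ∧
          OneStepUp (cycRel fC) (cycRel fD) a b) Φm φ ∧
      Relation.ReflTransGen
        (fun a b => a ∈ Mon1 fC fD i ∧ b ∈ Mon1 fC fD i ∧
          OneStepUp (cycRel fC) (cycRel fD) a b) φ ΦM := by
  classical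
  have hn : 3 ≤ n := by
    rcases hD with h | ⟨h, _⟩ <;> omega
  obtain ⟨α0, hα0⟩ := sel_nonempty fC fD i hsub
  set S : Finset (Fin n → Fin m) := Finset.univ.filter (fun α => Sel fC fD i α) with hS
  have hmemS : ∀ α : Fin n → Fin m, α ∈ S ↔ Sel fC fD i α := by
    intro a
    rw [hS, Finset.mem_filter]
    simp
  have hSne : S.Nonempty := ⟨α0, (hmemS α0).2 hα0⟩
  set top : Fin n → Fin m := S.sup' hSne id with htopdef
  set bot : Fin n → Fin m := S.inf' hSne id with hbotdef
  have htop : Sel fC fD i top :=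
    Finset.sup'_mem {α : Fin n → Fin m | Sel fC fD i α}
      (fun x hx y hy => sel_sup fC fD i hx hy) S hSne id (fun a ha => (hmemS a).1 ha)
  have hbot : Sel fC fD i bot :=
    Finset.inf'_mem {α : Fin n → Fin m | Sel fC fD i α}
      (fun x hx y hy => sel_inf fC fD i hx hy) S hSne id (fun a ha => (hmemS a).1 ha)
  have hreach : ∀ φ ∈ Mon1 fC fD i,
      Relation.ReflTransGen
        (fun a b => a ∈ Mon1 fC fD i ∧ b ∈ Mon1 fC fD i ∧
          OneStepUp (cycRel fC) (cycRel fD) a b) (Phi i top) φ ∧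
      Relation.ReflTransGen
        (fun a b => a ∈ Mon1 fC fD i ∧ b ∈ Mon1 fC fD i ∧
          OneStepUp (cycRel fC) (cycRel fD) a b) φ (Phi i bot) := by
    intro φ hφ
    obtain ⟨α, hαSel, hφeq⟩ := Mon1_exists_sel fC fD i hm hn hφ
    have hαS : α ∈ S := (hmemS α).2 hαSel
    have hle1 : ∀ t, α t ≤ top t := fun t => (Finset.le_sup' id hαS) t
    have hle2 : ∀ t, bot t ≤ α t := fun t => (Finset.inf'_le id hαS) t
    rw [hφeq]
    exact ⟨upPath fC fD i hm hn htop hαSel hle1, upPath fC fD i hm hn hαSel hbot hle2⟩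
  constructor
  · -- connectivity
    intro φ hφ ψ hψ
    have hmono : ∀ a b : ZMod m → ZMod n,
        (a ∈ Mon1 fC fD i ∧ b ∈ Mon1 fC fD i ∧
          OneStepUp (cycRel fC) (cycRel fD) a b) →
        (a ∈ Mon1 fC fD i ∧ b ∈ Mon1 fC fD i ∧
          HomEdge (cycRel fC) (cycRel fD) a b) :=
      fun a b h => ⟨h.1, h.2.1, h.2.2.1⟩
    have c1 := Relation.ReflTransGen.mono hmono _ _ ((hreach φ hφ).2)
    have c2 := Relation.ReflTransGen.mono hmono _ _ ((hreach ψ hψ).2)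
    have hsym : Symmetric (fun a b : ZMod m → ZMod n =>
        a ∈ Mon1 fC fD i ∧ b ∈ Mon1 fC fD i ∧ HomEdge (cycRel fC) (cycRel fD) a b) :=
      fun a b h => ⟨h.2.1, h.1, Or.symm h.2.2⟩
    exact c1.trans ((@Relation.ReflTransGen.symmetric _ _ ⟨fun a b h => hsym h⟩).symm _ _ c2)
  · exact ⟨Phi i top, Phi_mem_Mon1 fC fD i hm hn htop,
      Phi i bot, Phi_mem_Mon1 fC fD i hm hn hbot,
      fun φ hφ => hreach φ hφ⟩

end Recon
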